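/- Let D ⊆ ℂ^d be a starlike circular domain containing the origin (i.e., tz ∈ D for all z ∈ D and t ∈ [0,1], and e^{iθ}z ∈ D for all θ ∈ ℝ). If D is Kobayashi hyperbolic, then D is bounded. -/

import Mathlib

/-!
If `D` is unbounded, pick `z ∈ D` with `‖z‖` huge. Starlikeness and circularity make the disc
`ζ ↦ ζ • z` lie in `D`, so `0` is Kobayashi-close to the point `(r / 2‖z‖) • z` of the sphere of
radius `r / 2`, where `ball 0 r ⊆ D`. By compactness these points accumulate at some `w` on that
sphere, and affine discs inside `ball 0 r` join them to `w` at small cost. Hence the Kobayashi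
distance from `0` to `w ≠ 0` vanishes, and `D` is not hyperbolic.
-/

open Metric Set Filter Complex Topology

noncomputable def arctanh (r : ℝ) : ℝ := (1 / 2) * Real.log ((1 + r) / (1 - r))

/-- The Poincaré distance on the unit disk: `ρ(a,b) = arctanh |(a-b)/(1 - conj a · b)|`. -/
noncomputable def diskDist (a b : ℂ) : ℝ :=
  arctanh ‖(a - b) / (1 - (starRingEnd ℂ) a * b)‖

/-- The Kobayashi pseudodistance of a domain `D ⊆ ℂ^d`: the infimum, over chains of analytic
discs joining `p` to `q` within `D`, of the sums of Poincaré distances of the parameters. -/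
noncomputable def kobayashiDist {d : ℕ} (D : Set (EuclideanSpace ℂ (Fin d)))
    (p q : EuclideanSpace ℂ (Fin d)) : ℝ :=
  sInf {r : ℝ | ∃ (n : ℕ) (φ : Fin (n + 1) → ℂ → EuclideanSpace ℂ (Fin d))
      (a b : Fin (n + 1) → ℂ),
    (∀ i, DifferentiableOn ℂ (φ i) (ball (0 : ℂ) 1) ∧ MapsTo (φ i) (ball (0 : ℂ) 1) D ∧
      a i ∈ ball (0 : ℂ) 1 ∧ b i ∈ ball (0 : ℂ) 1) ∧
    φ 0 (a 0) = p ∧ φ (Fin.last n) (b (Fin.last n)) = q ∧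
    (∀ i : Fin n, φ i.castSucc (b i.castSucc) = φ i.succ (a i.succ)) ∧
    r = ∑ i, diskDist (a i) (b i)}

def KobayashiHyperbolic {d : ℕ} (D : Set (EuclideanSpace ℂ (Fin d))) : Prop :=
  ∀ p ∈ D, ∀ q ∈ D, p ≠ q → 0 < kobayashiDist D p q

lemma arctanh_nonneg {r : ℝ} (hr : 0 ≤ r) : 0 ≤ arctanh r := by
  unfold arctanh
  have : 0 ≤ Real.log ((1 + r) / (1 - r)) := by
    rcases lt_trichotomy r 1 with h | rfl | h
    · exact Real.log_nonneg ((one_le_div (by linarith)).2 (by linarith))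
    · simp
    · rw [show (1 : ℝ) - r = -(r - 1) by ring, div_neg, Real.log_neg_eq_log]
      exact Real.log_nonneg ((one_le_div (by linarith)).2 (by linarith))
  positivity

lemma continuousAt_arctanh {x : ℝ} (hx : x ∈ Ioo (-1) 1) : ContinuousAt arctanh x := by
  have h1 : 1 - x ≠ 0 := by linarith [hx.2]
  have h2 : (1 + x) / (1 - x) ≠ 0 := div_ne_zero (by linarith [hx.1]) h1
  unfold arctanh
  exact continuousAt_const.mul <| ((continuousAt_const.add continuousAt_id).div
    (continuousAt_const.sub continuousAt_id) h1).log h2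

lemma tendsto_arctanh_nhds_zero : Tendsto arctanh (𝓝 0) (𝓝 0) := by
  simpa [arctanh] using (continuousAt_arctanh (by norm_num : (0 : ℝ) ∈ Ioo (-1) 1)).tendsto

lemma diskDist_nonneg (a b : ℂ) : 0 ≤ diskDist a b :=
  arctanh_nonneg (norm_nonneg _)

lemma diskDist_zero_ofReal {x : ℝ} (hx : 0 ≤ x) : diskDist 0 x = arctanh x := by
  simp [diskDist, abs_of_nonneg hx]

def IsHolomorphicDisc {E : Type*} [NormedAddCommGroup E] [NormedSpace ℂ E]
    (D : Set E) (φ : ℂ → E) : Prop :=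
  DifferentiableOn ℂ φ (ball 0 1) ∧ MapsTo φ (ball 0 1) D

section Discs

variable {E : Type*} [NormedAddCommGroup E] [NormedSpace ℂ E] {D : Set E}

lemma balanced_of_starlike_of_circular
    (hstar : ∀ z ∈ D, ∀ t : ℝ, t ∈ Icc (0 : ℝ) 1 → (t : ℂ) • z ∈ D)
    (hcirc : ∀ z ∈ D, ∀ θ : ℝ, Complex.exp ((θ : ℂ) * Complex.I) • z ∈ D) :
    Balanced ℂ D :=
  balanced_iff_smul_mem.mpr fun ζ hζ z hz => by
    rw [← Complex.norm_mul_exp_arg_mul_I ζ, ← smul_smul]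
    exact hstar _ (hcirc z hz ζ.arg) ‖ζ‖ ⟨norm_nonneg _, hζ⟩

lemma Balanced.isHolomorphicDisc_smul (hD : Balanced ℂ D) {z : E} (hz : z ∈ D) :
    IsHolomorphicDisc D (fun ζ : ℂ => ζ • z) :=
  ⟨(differentiable_id.smul_const z).differentiableOn, fun _ hζ =>
    hD.smul_mem (mem_ball_zero_iff.mp hζ).le hz⟩

lemma isHolomorphicDisc_affine {p q : E} {R β : ℝ} (hball : ball p R ⊆ D) (hβ : 0 < β)
    (hq : ‖q - p‖ < R * β) : IsHolomorphicDisc D (fun ζ : ℂ => p + (ζ / β) • (q - p)) := by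
  refine ⟨((differentiable_const _).add
    ((differentiable_id.div_const _).smul_const _)).differentiableOn, fun ζ hζ => hball ?_⟩
  rw [mem_ball_zero_iff] at hζ
  rw [mem_ball_iff_norm, add_sub_cancel_left, norm_smul, norm_div, Complex.norm_real,
    Real.norm_of_nonneg hβ.le]
  calc ‖ζ‖ / β * ‖q - p‖ ≤ 1 / β * ‖q - p‖ := by gcongr
    _ < R := by rw [one_div_mul_eq_div, div_lt_iff₀ hβ]; exact hq

end Discs

section Kobayashi

variable {d : ℕ} {D : Set (EuclideanSpace ℂ (Fin d))}

lemma kobayashiDist_le_diskDist_add_diskDist {φ ψ : ℂ → EuclideanSpace ℂ (Fin d)}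
    (hφ : IsHolomorphicDisc D φ) (hψ : IsHolomorphicDisc D ψ) {a b a' b' : ℂ}
    (ha : a ∈ ball (0 : ℂ) 1) (hb : b ∈ ball (0 : ℂ) 1)
    (ha' : a' ∈ ball (0 : ℂ) 1) (hb' : b' ∈ ball (0 : ℂ) 1)
    (hjoin : φ b = ψ a') {p q : EuclideanSpace ℂ (Fin d)} (hp : φ a = p) (hq : ψ b' = q) :
    kobayashiDist D p q ≤ diskDist a b + diskDist a' b' := by
  refine csInf_le ⟨0, ?_⟩ ⟨1, ![φ, ψ], ![a, a'], ![b, b'], ?_, hp, hq, ?_, ?_⟩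
  · rintro _ ⟨n, -, a, b, -, -, -, -, rfl⟩
    exact Finset.sum_nonneg fun i _ => diskDist_nonneg _ _
  · rw [Fin.forall_fin_two]
    exact ⟨⟨hφ.1, hφ.2, ha, hb⟩, ⟨hψ.1, hψ.2, ha', hb'⟩⟩
  · simpa using hjoin
  · simp [Fin.sum_univ_two]

lemma Balanced.kobayashiDist_zero_le_arctanh_add_arctanh (hD : Balanced ℂ D)
    {z q : EuclideanSpace ℂ (Fin d)} (hz : z ∈ D) {s R β : ℝ} (hs₀ : 0 ≤ s) (hs₁ : s < 1)
    (hball : ball ((s : ℂ) • z) R ⊆ D) (hβ₀ : 0 < β) (hβ₁ : β < 1)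
    (hq : ‖q - (s : ℂ) • z‖ < R * β) :
    kobayashiDist D 0 q ≤ arctanh s + arctanh β := by
  have hunit : ∀ x : ℝ, 0 ≤ x → x < 1 → (x : ℂ) ∈ ball (0 : ℂ) 1 := fun x hx₀ hx₁ => by
    rwa [mem_ball_zero_iff, Complex.norm_real, Real.norm_of_nonneg hx₀]
  have hβ : (β : ℂ) ≠ 0 := ofReal_ne_zero.mpr hβ₀.ne'
  have := kobayashiDist_le_diskDist_add_diskDist (p := 0) (q := q)
    (hD.isHolomorphicDisc_smul hz) (isHolomorphicDisc_affine hball hβ₀ hq)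
    (mem_ball_self one_pos) (hunit s hs₀ hs₁) (mem_ball_self one_pos) (hunit β hβ₀.le hβ₁)
    (by simp) (zero_smul ℂ z) (by simp [div_self hβ])
  rwa [diskDist_zero_ofReal hs₀, diskDist_zero_ofReal hβ₀.le] at this

lemma Balanced.exists_norm_eq_kobayashiDist_zero_nonpos (hD : Balanced ℂ D)
    {r : ℝ} (hr : 0 < r) (hball : ball 0 r ⊆ D) (hunb : ¬Bornology.IsBounded D) :
    ∃ w, ‖w‖ = r / 2 ∧ kobayashiDist D 0 w ≤ 0 := by
  rw [isBounded_iff_forall_norm_le] at hunb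
  push Not at hunb
  choose x hxD hx using fun n : ℕ => hunb n
  have hx₀ (n : ℕ) : 0 < ‖x n‖ := (Nat.cast_nonneg n).trans_lt (hx n)
  set s : ℕ → ℝ := fun n => r / 2 / ‖x n‖
  set y : ℕ → EuclideanSpace ℂ (Fin d) := fun n => (s n : ℂ) • x n
  have hs₀ (n : ℕ) : 0 < s n := div_pos (half_pos hr) (hx₀ n)
  have hs : Tendsto s atTop (𝓝 0) := tendsto_const_nhds.div_atTop <|
    tendsto_atTop_mono (fun n => (hx n).le) tendsto_natCast_atTop_atTop
  have hy (n : ℕ) : ‖y n‖ = r / 2 := by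
    simp only [y, norm_smul, Complex.norm_real, Real.norm_of_nonneg (hs₀ n).le, s]
    exact div_mul_cancel₀ _ (hx₀ n).ne'
  obtain ⟨w, hw, φ, hφ, hyw⟩ := (isCompact_sphere _ _).tendsto_subseq
    fun n => mem_sphere_zero_iff_norm.mpr (hy n)
  refine ⟨w, mem_sphere_zero_iff_norm.mp hw, ?_⟩
  set β : ℕ → ℝ := fun n => 2 * ‖y (φ n) - w‖ / r + s (φ n)
  have hsφ : Tendsto (s ∘ φ) atTop (𝓝 0) := hs.comp hφ.tendsto_atTop
  have hβ : Tendsto β atTop (𝓝 0) := by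
    simpa using ((tendsto_iff_norm_sub_tendsto_zero.mp hyw).const_mul 2 |>.div_const r).add hsφ
  have hbound : ∀ᶠ n in atTop, kobayashiDist D 0 w ≤ arctanh (s (φ n)) + arctanh (β n) := by
    filter_upwards [hsφ.eventually (gt_mem_nhds one_pos), hβ.eventually (gt_mem_nhds one_pos)]
      with n hs₁ hβ₁
    have hβ₀ : 0 < β n := add_pos_of_nonneg_of_pos (by positivity) (hs₀ _)
    refine hD.kobayashiDist_zero_le_arctanh_add_arctanh (R := r / 2) (hxD (φ n)) (hs₀ _).le
      hs₁ ((ball_subset_ball' ?_).trans hball) hβ₀ hβ₁ ?_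
    · rw [dist_zero_right, hy]; linarith
    · have hβn : r / 2 * β n = ‖y (φ n) - w‖ + r / 2 * s (φ n) := by
        simp only [β]; field_simp
      rw [norm_sub_rev, hβn]
      exact lt_add_of_pos_right _ (mul_pos (half_pos hr) (hs₀ _))
  simpa using ge_of_tendsto ((tendsto_arctanh_nhds_zero.comp hsφ).add
    (tendsto_arctanh_nhds_zero.comp hβ)) hbound

end Kobayashi

theorem stmt17_general {d : ℕ} (D : Set (EuclideanSpace ℂ (Fin d)))
    (hD : IsOpen D) (h0 : (0 : EuclideanSpace ℂ (Fin d)) ∈ D)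
    (hstar : ∀ z ∈ D, ∀ t : ℝ, t ∈ Icc (0 : ℝ) 1 → (t : ℂ) • z ∈ D)
    (hcirc : ∀ z ∈ D, ∀ θ : ℝ, Complex.exp ((θ : ℂ) * Complex.I) • z ∈ D)
    (hhyp : KobayashiHyperbolic D) :
    Bornology.IsBounded D := by
  by_contra hunb
  obtain ⟨r, hr, hball⟩ := Metric.isOpen_iff.mp hD 0 h0
  have hbal : Balanced ℂ D := balanced_of_starlike_of_circular hstar hcirc
  obtain ⟨w, hw, hdist⟩ := hbal.exists_norm_eq_kobayashiDist_zero_nonpos hr hball hunb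
  have hwD : w ∈ D := hball (by rw [mem_ball_zero_iff, hw]; linarith)
  have hw₀ : (0 : EuclideanSpace ℂ (Fin d)) ≠ w := by
    rintro rfl
    rw [norm_zero] at hw
    linarith
  exact (hhyp 0 h0 w hwD hw₀).not_ge hdist

/-- Kodama's theorem: a starlike circular domain `D ⊆ ℂ^d` containing the origin that is
Kobayashi hyperbolic is bounded. -/
theorem stmt17 {d : ℕ} (D : Set (EuclideanSpace ℂ (Fin d)))
    (hD : IsOpen D) (hDconn : IsConnected D) (h0 : (0 : EuclideanSpace ℂ (Fin d)) ∈ D)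
    (hstar : ∀ z ∈ D, ∀ t : ℝ, t ∈ Icc (0 : ℝ) 1 → (t : ℂ) • z ∈ D)
    (hcirc : ∀ z ∈ D, ∀ θ : ℝ, Complex.exp ((θ : ℂ) * Complex.I) • z ∈ D)
    (hhyp : KobayashiHyperbolic D) :
    Bornology.IsBounded D :=
  stmt17_general D hD h0 hstar hcirc hhyp
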